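/- Let T(w) := ₁φ₁(0;Qq²;q,Qq²w) / ₁φ₁(0;Qq;q,Qqw) ∈ K[[w]] (under Q = q^ν, J_{ν+1}(z;q^{−1})/J_ν(z;q^{−1}) = (q^{ν+1}z/(q^{ν+1}−1))·T(z²)). Then T(w) admits the following two continued fraction expansions: (i) T(w) = 1/(1 − b_0 w − a_1 w/(1 − b_1 w − a_2 w/(1 − b_2 w − ⋯))) with b_n := Qq^{n+1}/(1 − Qq^{n+1}) and a_n := Q²q^{2n+1}/((1 − Qq^n)(1 − Qq^{n+1})) (so T is the moment generating function of orthogonal polynomials of type R_I); and (ii) T(w) = 1/(1 − λ'_1 w/(1 − λ'_2 w/(1 − λ'_3 w/(1 − ⋯)))) with λ'_{2i} := Q²q^{3i+1}/((1 − Qq^{2i})(1 − Qq^{2i+1})) and λ'_{2i+1} := Qq^{i+1}/((1 − Qq^{2i+1})(1 − Qq^{2i+2})) (so T is also the even-moment generating function of usual orthogonal polynomials). -/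

import Mathlib

noncomputable section

/-- `K`, the fraction field of `ℚ[q,Q]` (`Q` plays the role of `q^ν`). -/
abbrev K : Type := FractionRing (MvPolynomial (Fin 2) ℚ)

def qv : K := algebraMap (MvPolynomial (Fin 2) ℚ) K (MvPolynomial.X 0)
def Qv : K := algebraMap (MvPolynomial (Fin 2) ℚ) K (MvPolynomial.X 1)

/-- The q-Pochhammer symbol `(a;q)_n`. -/
def qPoch (a : K) (n : ℕ) : K := ∏ j ∈ Finset.range n, (1 - a * qv ^ j)

/-- `₁φ₁(0; c; q, α w)` as an element of `K[[w]]`: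
its `n`-th coefficient is `(−1)^n q^{n(n−1)/2} α^n / ((q;q)_n (c;q)_n)`. -/
def phiSeries (c α : K) : PowerSeries K :=
  PowerSeries.mk fun n =>
    (-1) ^ n * qv ^ (n * (n - 1) / 2) * α ^ n / (qPoch qv n * qPoch c n)

/-- `T(w) = ₁φ₁(0;Qq²;q,Qq²w) / ₁φ₁(0;Qq;q,Qqw)`; under `Q = q^ν` one has
`J_{ν+1}(z;q⁻¹)/J_ν(z;q⁻¹) = (q^{ν+1}z/(q^{ν+1}−1)) T(z²)`. -/
def T : PowerSeries K :=
  phiSeries (Qv * qv ^ 2) (Qv * qv ^ 2) * (phiSeries (Qv * qv) (Qv * qv))⁻¹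

/-- `b_n = Q q^{n+1}/(1 − Q q^{n+1})`. -/
def bSeq (n : ℕ) : K := Qv * qv ^ (n + 1) / (1 - Qv * qv ^ (n + 1))

/-- `a_n = Q² q^{2n+1}/((1 − Q q^n)(1 − Q q^{n+1}))`. -/
def aSeq (n : ℕ) : K :=
  Qv ^ 2 * qv ^ (2 * n + 1) / ((1 - Qv * qv ^ n) * (1 - Qv * qv ^ (n + 1)))

/-- `λ'_{2i} = Q²q^{3i+1}/((1 − Qq^{2i})(1 − Qq^{2i+1}))` and
`λ'_{2i+1} = Qq^{i+1}/((1 − Qq^{2i+1})(1 − Qq^{2i+2}))`. -/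
def lamSeq (n : ℕ) : K :=
  (if n % 2 = 0 then Qv ^ 2 * qv ^ (3 * (n / 2) + 1) else Qv * qv ^ (n / 2 + 1)) /
    ((1 - Qv * qv ^ n) * (1 - Qv * qv ^ (n + 1)))

/-- The depth-`N` convergent of the type `R_I` continued fraction
`1/(1 − b_0 w − a_1 w/(1 − b_1 w − a_2 w/(⋯ − a_N w/(1 − b_N w))))`:
`convR b a N k` is the tail starting with `b_{N-k}`, so the convergent is
`convR b a N N`. -/
def convR (b a : ℕ → K) (N : ℕ) : ℕ → PowerSeries K
  | 0 => (1 - PowerSeries.C (b N) * PowerSeries.X)⁻¹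
  | k + 1 =>
      (1 - PowerSeries.C (b (N - k - 1)) * PowerSeries.X -
          PowerSeries.C (a (N - k)) * PowerSeries.X * convR b a N k)⁻¹

/-- The depth-`N` convergent of the Stieltjes-type continued fraction
`1/(1 − λ_1 w/(1 − λ_2 w/(⋯ − λ_N w/1)))`: `convS λ N k` is the tail whose outermost
numerator is `λ_{N-k+1}` (with `convS λ N 0 = 1`), so the convergent is `convS λ N N`. -/
def convS (lam : ℕ → K) (N : ℕ) : ℕ → PowerSeries K
  | 0 => 1
  | k + 1 => (1 - PowerSeries.C (lam (N - k)) * PowerSeries.X * convS lam N k)⁻¹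

/-!
Write `φ(c, α) = ₁φ₁(0; c; q, α w)`. The two factorisations
`(c;q)_{n+1} = (1 - c) (cq;q)_n = (c;q)_n (1 - c q^n)` give the contiguous relations
`φ(c, α) = φ(cq, αq) - α / ((1 - c)(1 - cq)) · w · φ(cq², αq)` and
`φ(cq, α) = (1 - c) φ(c, α) + c φ(cq, αq)`.
They combine into three-term recurrences: `F_m = (1 - b_m w) F_{m+1} - a_{m+1} w F_{m+2}` for
`F_m = φ(Qq^{m+1}, Qq^{m+1})`, and `H_m = H_{m+1} - λ'_{m+1} w H_{m+2}` for
`H_m = φ(Qq^{m+1}, Qq^{⌈m/2⌉+1})`. Dividing by the middle term,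
`F_{m+1}/F_m = 1/(1 - b_m w - a_{m+1} w · F_{m+2}/F_{m+1})`; as every partial numerator carries
a factor `w`, truncating after `N` steps changes `T = F_1/F_0` only modulo `w^{N+1}`.
The Stieltjes fraction is the case `b = 0`.
-/

open PowerSeries

lemma one_sub_qv_pow_ne_zero {m : ℕ} (hm : m ≠ 0) : (1 : K) - qv ^ m ≠ 0 := by
  intro h
  have hpoly : (1 : MvPolynomial (Fin 2) ℚ) - MvPolynomial.X 0 ^ m = 0 :=
    IsFractionRing.injective _ K (by simpa [qv] using h)
  simpa [zero_pow hm] using congrArg MvPolynomial.constantCoeff hpoly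

lemma one_sub_Qv_mul_qv_pow_ne_zero (m : ℕ) : (1 : K) - Qv * qv ^ m ≠ 0 := by
  intro h
  have hpoly : (1 : MvPolynomial (Fin 2) ℚ) - MvPolynomial.X 1 * MvPolynomial.X 0 ^ m = 0 :=
    IsFractionRing.injective _ K (by simpa [qv, Qv] using h)
  simpa using congrArg MvPolynomial.constantCoeff hpoly

lemma qPoch_succ (a : K) (n : ℕ) : qPoch a (n + 1) = qPoch a n * (1 - a * qv ^ n) :=
  Finset.prod_range_succ _ _

lemma qPoch_succ' (a : K) (n : ℕ) : qPoch a (n + 1) = (1 - a) * qPoch (a * qv) n := by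
  simp only [qPoch, Finset.prod_range_succ', pow_zero, mul_one, pow_succ, mul_assoc, mul_comm]

lemma qPoch_ne_zero {a : K} (ha : ∀ j, 1 - a * qv ^ j ≠ 0) (n : ℕ) : qPoch a n ≠ 0 :=
  Finset.prod_ne_zero_iff.mpr fun j _ => ha j

lemma qPoch_qv_ne_zero (n : ℕ) : qPoch qv n ≠ 0 :=
  qPoch_ne_zero (fun j => by rw [← pow_succ']; exact one_sub_qv_pow_ne_zero j.succ_ne_zero) n

lemma coeff_phiSeries (c α : K) (n : ℕ) :
    coeff n (phiSeries c α) =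
      (-1) ^ n * qv ^ (n * (n - 1) / 2) * α ^ n / (qPoch qv n * qPoch c n) :=
  coeff_mk _ _

lemma constantCoeff_phiSeries (c α : K) : constantCoeff (phiSeries c α) = 1 := by
  simp [← coeff_zero_eq_constantCoeff_apply, coeff_phiSeries, qPoch]

lemma coeff_phiSeries_mul_qv (c α : K) (n : ℕ) :
    coeff n (phiSeries c (α * qv)) = qv ^ n * coeff n (phiSeries c α) := by
  simp only [coeff_phiSeries, mul_pow]
  ring

lemma coeff_succ_phiSeries (c α : K) (n : ℕ) :
    coeff (n + 1) (phiSeries c α) =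
      -α / ((1 - qv ^ (n + 1)) * (1 - c)) * coeff n (phiSeries (c * qv) (α * qv)) := by
  have htri : (n + 1) * (n + 1 - 1) / 2 = n * (n - 1) / 2 + n := by
    rcases n with _ | n
    · rfl
    · rw [Nat.add_sub_cancel, Nat.add_sub_cancel, ← Nat.add_mul_div_left _ _ two_pos]
      congr 1; ring
  simp only [coeff_phiSeries, qPoch_succ qv, qPoch_succ' c, htri, pow_add, mul_pow,
    div_eq_mul_inv, mul_inv]
  ring

lemma one_sub_mul_qv_mul_qv_pow_ne_zero {c : K} (hc : ∀ j, 1 - c * qv ^ j ≠ 0) (j : ℕ) :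
    1 - c * qv * qv ^ j ≠ 0 := by
  rw [mul_assoc, ← pow_succ']
  exact hc _

lemma coeff_phiSeries_mul_qv_left {d : K} (hd : ∀ j, 1 - d * qv ^ j ≠ 0) (β : K) (n : ℕ) :
    (1 - d * qv ^ n) * coeff n (phiSeries (d * qv) β) = (1 - d) * coeff n (phiSeries d β) := by
  have key : qPoch d n * (1 - d * qv ^ n) = (1 - d) * qPoch (d * qv) n := by
    rw [← qPoch_succ, qPoch_succ']
  simp only [coeff_phiSeries]
  rw [mul_div_assoc', mul_div_assoc',
    div_eq_div_iff
      (mul_ne_zero (qPoch_qv_ne_zero n) (qPoch_ne_zero (one_sub_mul_qv_mul_qv_pow_ne_zero hd) n))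
      (mul_ne_zero (qPoch_qv_ne_zero n) (qPoch_ne_zero hd n))]
  linear_combination (-1) ^ n * qv ^ (n * (n - 1) / 2) * β ^ n * qPoch qv n * key

lemma coeff_succ_C_mul_X_mul {k : Type*} [CommRing k] (a : k) (f : k⟦X⟧) (n : ℕ) :
    coeff (n + 1) (C a * X * f) = a * coeff n f := by
  rw [mul_assoc, coeff_C_mul, coeff_succ_X_mul]

section Contiguous

variable {c : K} (hc : ∀ j, 1 - c * qv ^ j ≠ 0)
include hc

lemma phiSeries_mul_qv_eq (α : K) :
    phiSeries (c * qv) α = C (1 - c) * phiSeries c α + C c * phiSeries (c * qv) (α * qv) := by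
  ext n
  have h := coeff_phiSeries_mul_qv_left hc α n
  simp only [map_add, coeff_C_mul, coeff_phiSeries_mul_qv]
  linear_combination h

lemma phiSeries_contiguous_both (α : K) :
    phiSeries c α = phiSeries (c * qv) (α * qv)
      - C (α / ((1 - c) * (1 - c * qv))) * X * phiSeries (c * qv * qv) (α * qv) := by
  ext n
  rcases n with _ | n
  · simp [coeff_zero_eq_constantCoeff_apply, constantCoeff_phiSeries]
  have hrel :=
    coeff_phiSeries_mul_qv_left (one_sub_mul_qv_mul_qv_pow_ne_zero hc) (α * qv) n
  rw [map_sub, coeff_succ_C_mul_X_mul, coeff_succ_phiSeries c, coeff_succ_phiSeries (c * qv),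
    coeff_phiSeries_mul_qv (c * qv * qv)]
  generalize coeff n (phiSeries (c * qv) (α * qv)) = y at hrel ⊢
  generalize coeff n (phiSeries (c * qv * qv) (α * qv)) = x at hrel ⊢
  have hq := one_sub_qv_pow_ne_zero n.succ_ne_zero
  have h0 := hc 0
  have h1 := hc 1
  simp only [pow_zero, mul_one, pow_one] at h0 h1
  field_simp
  linear_combination α * hrel

lemma phiSeries_contiguous_left (α : K) :
    phiSeries c α = phiSeries (c * qv) α
      - C (c * α / ((1 - c) * (1 - c * qv))) * X * phiSeries (c * qv * qv) (α * qv) := by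
  have hboth := phiSeries_contiguous_both hc α
  have hC : C (c * α / ((1 - c) * (1 - c * qv))) = C c * C (α / ((1 - c) * (1 - c * qv))) := by
    rw [← map_mul, mul_div_assoc]
  rw [phiSeries_mul_qv_eq hc α, hC, map_sub, map_one]
  linear_combination C c * hboth

lemma phiSeries_diag_rec :
    phiSeries c c = (1 - C (c / (1 - c)) * X) * phiSeries (c * qv) (c * qv)
        - C (c ^ 2 * qv / ((1 - c) * (1 - c * qv))) * X
        * phiSeries (c * qv * qv) (c * qv * qv) := by
  have h0 := hc 0
  have h1 := hc 1
  simp only [pow_zero, mul_one, pow_one] at h0 h1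
  have hb : C (c / (1 - c)) = C (c / ((1 - c) * (1 - c * qv))) * C (1 - c * qv) := by
    rw [← map_mul]; congr 1; field_simp
  have ha : C (c ^ 2 * qv / ((1 - c) * (1 - c * qv)))
      = C (c / ((1 - c) * (1 - c * qv))) * C (c * qv) := by
    rw [← map_mul]; congr 1; field_simp
  -- eliminate `φ(cq², cq)` between the two contiguous relations
  have hboth := phiSeries_contiguous_both hc c
  have hshift := phiSeries_mul_qv_eq (one_sub_mul_qv_mul_qv_pow_ne_zero hc) (c * qv)
  linear_combination hboth - C (c / ((1 - c) * (1 - c * qv))) * X * hshift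
    + X * phiSeries (c * qv) (c * qv) * hb + X * phiSeries (c * qv * qv) (c * qv * qv) * ha

end Contiguous

lemma X_pow_dvd_inv_sub_inv {k : Type*} [Field k] {m : ℕ} {A B : k⟦X⟧}
    (hA : constantCoeff A ≠ 0) (hB : constantCoeff B ≠ 0) (h : X ^ m ∣ A - B) :
    X ^ m ∣ A⁻¹ - B⁻¹ := by
  have : A⁻¹ - B⁻¹ = -(A⁻¹ * B⁻¹) * (A - B) := by
    linear_combination
      B⁻¹ * PowerSeries.inv_mul_cancel A hA - A⁻¹ * PowerSeries.mul_inv_cancel B hB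
  rw [this]
  exact h.mul_left _

lemma constantCoeff_one_sub_C_mul_X_sub_ne_zero {k : Type*} [Field k] (u v : k) (G : k⟦X⟧) :
    constantCoeff (1 - C u * X - C v * X * G) ≠ 0 := by
  simp

section ContinuedFraction

variable {F : ℕ → K⟦X⟧} {b a : ℕ → K} (hF : ∀ m, constantCoeff (F m) ≠ 0)
  (hrec : ∀ m, F m = (1 - C (b m) * X) * F (m + 1) - C (a (m + 1)) * X * F (m + 2))
include hF hrec

lemma ratio_eq_inv (m : ℕ) :
    F (m + 1) * (F m)⁻¹
      = (1 - C (b m) * X - C (a (m + 1)) * X * (F (m + 2) * (F (m + 1))⁻¹))⁻¹ := by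
  have hcancel : F (m + 2) * (F (m + 1))⁻¹ * F (m + 1) = F (m + 2) := by
    rw [mul_assoc, PowerSeries.inv_mul_cancel _ (hF _), mul_one]
  have hFm : F m
      = (1 - C (b m) * X - C (a (m + 1)) * X * (F (m + 2) * (F (m + 1))⁻¹)) * F (m + 1) := by
    rw [hrec m]
    linear_combination C (a (m + 1)) * X * hcancel
  rw [hFm, PowerSeries.mul_inv_rev, ← mul_assoc, PowerSeries.mul_inv_cancel _ (hF _), one_mul]

lemma X_pow_dvd_ratio_sub_convR {N : ℕ} (j : ℕ) :
    ∀ m, m + j = N → X ^ (j + 1) ∣ F (m + 1) * (F m)⁻¹ - convR b a N j := by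
  induction j with
  | zero =>
    rintro m rfl
    rw [add_zero, convR, ratio_eq_inv hF hrec]
    refine X_pow_dvd_inv_sub_inv (constantCoeff_one_sub_C_mul_X_sub_ne_zero _ _ _) (by simp) ?_
    generalize F (m + 2) * (F (m + 1))⁻¹ = R
    exact ⟨-(C (a (m + 1)) * R), by ring⟩
  | succ j ih =>
    rintro m rfl
    rw [convR, show m + (j + 1) - j - 1 = m by omega, show m + (j + 1) - j = m + 1 by omega,
      ratio_eq_inv hF hrec]
    refine X_pow_dvd_inv_sub_inv (constantCoeff_one_sub_C_mul_X_sub_ne_zero _ _ _)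
      (constantCoeff_one_sub_C_mul_X_sub_ne_zero _ _ _) ?_
    obtain ⟨R, hR⟩ := ih (m + 1) (by omega)
    refine ⟨-(C (a (m + 1)) * R), ?_⟩
    rw [pow_succ']
    linear_combination -(C (a (m + 1)) * X) * hR

lemma coeff_ratio_eq_coeff_convR {N i : ℕ} (hi : i ≤ N) :
    coeff i (F 1 * (F 0)⁻¹) = coeff i (convR b a N N) := by
  have h := X_pow_dvd_ratio_sub_convR hF hrec N 0 (zero_add N)
  rw [X_pow_dvd_iff] at h
  exact sub_eq_zero.mp (by simpa using h i (by omega))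

end ContinuedFraction

lemma convS_eq_convR_zero (lam : ℕ → K) (N k : ℕ) : convS lam N k = convR 0 lam N k := by
  induction k with
  | zero => simp [convS, convR]
  | succ k ih => simp [convS, convR, ih]

lemma one_sub_Qv_mul_qv_pow_mul_ne_zero (m j : ℕ) : 1 - Qv * qv ^ m * qv ^ j ≠ 0 := by
  rw [mul_assoc, ← pow_add]
  exact one_sub_Qv_mul_qv_pow_ne_zero _

def phiRI (m : ℕ) : K⟦X⟧ := phiSeries (Qv * qv ^ (m + 1)) (Qv * qv ^ (m + 1))

def phiStieltjes (m : ℕ) : K⟦X⟧ := phiSeries (Qv * qv ^ (m + 1)) (Qv * qv ^ ((m + 1) / 2 + 1))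

lemma phiRI_rec (m : ℕ) :
    phiRI m = (1 - C (bSeq m) * X) * phiRI (m + 1) - C (aSeq (m + 1)) * X * phiRI (m + 2) := by
  have h := phiSeries_diag_rec (one_sub_Qv_mul_qv_pow_mul_ne_zero (m + 1))
  simp only [phiRI, bSeq, aSeq]
  ring_nf at h ⊢
  exact h

lemma lamSeq_two_mul (i : ℕ) :
    lamSeq (2 * i)
      = Qv ^ 2 * qv ^ (3 * i + 1) / ((1 - Qv * qv ^ (2 * i)) * (1 - Qv * qv ^ (2 * i + 1))) := by
  simp [lamSeq]

lemma lamSeq_two_mul_add_one (i : ℕ) :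
    lamSeq (2 * i + 1)
      = Qv * qv ^ (i + 1) / ((1 - Qv * qv ^ (2 * i + 1)) * (1 - Qv * qv ^ (2 * i + 2))) := by
  simp [lamSeq, Nat.add_mod, show (2 * i + 1) / 2 = i by omega]

lemma phiStieltjes_two_mul (i : ℕ) :
    phiStieltjes (2 * i) = phiSeries (Qv * qv ^ (2 * i + 1)) (Qv * qv ^ (i + 1)) := by
  rw [phiStieltjes, show (2 * i + 1) / 2 = i by omega]

lemma phiStieltjes_two_mul_add_one (i : ℕ) :
    phiStieltjes (2 * i + 1) = phiSeries (Qv * qv ^ (2 * i + 2)) (Qv * qv ^ (i + 2)) := by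
  rw [phiStieltjes, show (2 * i + 1 + 1) / 2 = i + 1 by omega]

lemma phiStieltjes_rec (m : ℕ) :
    phiStieltjes m = phiStieltjes (m + 1) - C (lamSeq (m + 1)) * X * phiStieltjes (m + 2) := by
  obtain ⟨i, rfl | rfl⟩ := Nat.even_or_odd' m
  · have h := phiSeries_contiguous_both (one_sub_Qv_mul_qv_pow_mul_ne_zero (2 * i + 1))
      (Qv * qv ^ (i + 1))
    rw [phiStieltjes_two_mul, phiStieltjes_two_mul_add_one, lamSeq_two_mul_add_one,
      show 2 * i + 2 = 2 * (i + 1) by ring, phiStieltjes_two_mul]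
    ring_nf at h ⊢
    exact h
  · have h := phiSeries_contiguous_left (one_sub_Qv_mul_qv_pow_mul_ne_zero (2 * i + 2))
      (Qv * qv ^ (i + 2))
    rw [show 2 * i + 1 + 1 = 2 * (i + 1) by ring, show 2 * i + 1 + 2 = 2 * (i + 1) + 1 by ring,
      phiStieltjes_two_mul_add_one, phiStieltjes_two_mul, phiStieltjes_two_mul_add_one,
      lamSeq_two_mul]
    ring_nf at h ⊢
    exact h

lemma T_eq_phiRI : T = phiRI 1 * (phiRI 0)⁻¹ := by
  norm_num [T, phiRI]

lemma T_eq_phiStieltjes : T = phiStieltjes 1 * (phiStieltjes 0)⁻¹ := by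
  norm_num [T, phiStieltjes]

/-- Theorem 6.5 (two continued fraction expansions of the ratio of Hahn–Exton `q`-Bessel
functions): `T(w)` equals both the type `R_I` continued fraction with data `(b, a)` and
the Stieltjes continued fraction with data `λ'`, in the sense that for every `N ≥ 1` the
depth-`N` convergent agrees with `T` modulo `w^N`. -/
theorem hahn_exton_two_continued_fractions :
    (∀ N : ℕ, 1 ≤ N → ∀ i < N,
      PowerSeries.coeff i T = PowerSeries.coeff i (convR bSeq aSeq N N)) ∧
    (∀ N : ℕ, 1 ≤ N → ∀ i < N,
      PowerSeries.coeff i T = PowerSeries.coeff i (convS lamSeq N N)) := by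
  refine ⟨fun N _ i hi => ?_, fun N _ i hi => ?_⟩
  · rw [T_eq_phiRI]
    exact coeff_ratio_eq_coeff_convR (fun m => by simp [phiRI, constantCoeff_phiSeries])
      phiRI_rec hi.le
  · rw [T_eq_phiStieltjes, convS_eq_convR_zero]
    exact coeff_ratio_eq_coeff_convR (fun m => by simp [phiStieltjes, constantCoeff_phiSeries])
      (fun m => by simpa using phiStieltjes_rec m) hi.le

end
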